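/- arXiv:1309.6209 — 2 statements merged into one kernel-verified Lean document; each statement's English description precedes it below -/
import Mathlib

section
/- Let C be a category with binary coproducts +, an initial object 0, binary products ×, and a terminal object 1. Let κ : 0 → 1, β : 0 → 0×0, τ : 1+1 → 1 be the unique such arrows, and let ι_{A,B,C,D} : (A×B)+(C×D) → (A+C)×(B+D) be the canonical arrow whose restriction to A×B is ⟨inl∘fst, inl∘snd⟩ and to C×D is ⟨inr∘fst, inr∘snd⟩. Write α⁺, λ⁺, ρ⁺ for the associator and unitors of the coproduct monoidal structure (+,0) and α^×, λ^×, ρ^× for those of the product monoidal structure (×,1). Then ι is natural in A, B, C, D and the following twelve diagrams commute: (1) (α⁺×α⁺)∘ι∘(1+ι) = ι∘(ι+1)∘α⁺; (2) (ρ⁺×ρ⁺)∘ι∘(1+β) = ρ⁺; (3) (λ⁺×λ⁺)∘ι∘(β+1) = λ⁺; (4) τ∘(1+τ) = τ∘(τ+1)∘α⁺; (5) τ∘(1+κ) = ρ⁺; (6) τ∘(κ+1) = λ⁺; (7) α^×∘(1×ι)∘ι = (ι×1)∘ι∘(α^×+α^×); (8) ρ^×∘(1×τ)∘ι = ρ^×+ρ^×;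 (9) λ^×∘(τ×1)∘ι = λ^×+λ^×; (10) α^×∘(1×β)∘β = (β×1)∘β; (11) ρ^×∘(1×κ)∘β = 1_0; (12) λ^×∘(κ×1)∘β = 1_0. Hence every bicartesian category is a two-fold monoidal (duoidal) category with first structure (+,0) and second structure (×,1). -/
/-! The interchange `ι` is at once `⟨fst + fst, snd + snd⟩` and `[inl × inl, inr × inr]`.
Composing with the product projections turns naturality of `ι` and the `+`-associativity
diagram into naturality of `+` and of its associator; composing with the coproduct injections
turns the `×`-associativity diagram into naturality of the `×`-associator, and the unit diagrams
into identities since `X + 0` is `X` via `inl` and `X × 1` is `X` via `fst`. The diagrams with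
target `1` or source `0` commute by universality. -/

open CategoryTheory CategoryTheory.Limits

universe v u
set_option maxHeartbeats 1000000

variable {𝒞 : Type u} [Category.{v} 𝒞]

section Bicartesian

variable [HasBinaryProducts 𝒞] [HasBinaryCoproducts 𝒞] [HasInitial 𝒞] [HasTerminal 𝒞]

/-- The canonical interchange
`ι_{A,B,C,D} : (A×B)+(C×D) ⟶ (A+C)×(B+D)` of a bicartesian category, whose
restriction to `A×B` is `⟨inl∘fst, inl∘snd⟩` and to `C×D` is `⟨inr∘fst, inr∘snd⟩`. -/
noncomputable def biIota (A B C D : 𝒞) : (A ⨯ B) ⨿ (C ⨯ D) ⟶ (A ⨿ C) ⨯ (B ⨿ D) :=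
  coprod.desc (prod.lift (prod.fst ≫ coprod.inl) (prod.snd ≫ coprod.inl))
    (prod.lift (prod.fst ≫ coprod.inr) (prod.snd ≫ coprod.inr))

/-- The right unitor `X + 0 ≅ X` of the coproduct monoidal structure. -/
noncomputable def rPlus (X : 𝒞) : X ⨿ (⊥_ 𝒞) ⟶ X := coprod.desc (𝟙 X) (initial.to X)

/-- The left unitor `0 + X ≅ X` of the coproduct monoidal structure. -/
noncomputable def lPlus (X : 𝒞) : (⊥_ 𝒞) ⨿ X ⟶ X := coprod.desc (initial.to X) (𝟙 X)

/-- The right unitor `X × 1 ≅ X` of the product monoidal structure. -/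
noncomputable def rTimes (X : 𝒞) : X ⨯ (⊤_ 𝒞) ⟶ X := prod.fst

/-- The left unitor `1 × X ≅ X` of the product monoidal structure. -/
noncomputable def lTimes (X : 𝒞) : (⊤_ 𝒞) ⨯ X ⟶ X := prod.snd

end Bicartesian

theorem CategoryTheory.Limits.prod.associator_inv_naturality [HasBinaryProducts 𝒞]
    {X₁ X₂ X₃ Y₁ Y₂ Y₃ : 𝒞} (f₁ : X₁ ⟶ Y₁) (f₂ : X₂ ⟶ Y₂) (f₃ : X₃ ⟶ Y₃) :
    prod.map f₁ (prod.map f₂ f₃) ≫ (prod.associator Y₁ Y₂ Y₃).inv =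
      (prod.associator X₁ X₂ X₃).inv ≫ prod.map (prod.map f₁ f₂) f₃ := by
  rw [Iso.comp_inv_eq, Category.assoc, prod.associator_naturality, Iso.inv_hom_id_assoc]

theorem CategoryTheory.Limits.coprod.associator_inv_naturality [HasBinaryCoproducts 𝒞]
    {X₁ X₂ X₃ Y₁ Y₂ Y₃ : 𝒞} (f₁ : X₁ ⟶ Y₁) (f₂ : X₂ ⟶ Y₂) (f₃ : X₃ ⟶ Y₃) :
    coprod.map f₁ (coprod.map f₂ f₃) ≫ (coprod.associator Y₁ Y₂ Y₃).inv =
      (coprod.associator X₁ X₂ X₃).inv ≫ coprod.map (coprod.map f₁ f₂) f₃ := by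
  rw [Iso.comp_inv_eq, Category.assoc, coprod.associator_naturality, Iso.inv_hom_id_assoc]

section Interchange

variable [HasBinaryProducts 𝒞] [HasBinaryCoproducts 𝒞]

theorem biIota_fst (A B C D : 𝒞) : biIota A B C D ≫ prod.fst = coprod.map prod.fst prod.fst := by
  ext <;> simp [biIota]

theorem biIota_snd (A B C D : 𝒞) : biIota A B C D ≫ prod.snd = coprod.map prod.snd prod.snd := by
  ext <;> simp [biIota]

theorem inl_biIota (A B C D : 𝒞) :
    coprod.inl ≫ biIota A B C D = prod.map coprod.inl coprod.inl := by
  ext <;> simp [biIota]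

theorem inr_biIota (A B C D : 𝒞) :
    coprod.inr ≫ biIota A B C D = prod.map coprod.inr coprod.inr := by
  ext <;> simp [biIota]

theorem biIota_fst_assoc {A B C D X : 𝒞} (h : A ⨿ C ⟶ X) :
    biIota A B C D ≫ prod.fst ≫ h = coprod.map prod.fst prod.fst ≫ h := by
  rw [← Category.assoc, biIota_fst]

theorem biIota_snd_assoc {A B C D X : 𝒞} (h : B ⨿ D ⟶ X) :
    biIota A B C D ≫ prod.snd ≫ h = coprod.map prod.snd prod.snd ≫ h := by
  rw [← Category.assoc, biIota_snd]

theorem inl_biIota_assoc {A B C D X : 𝒞} (h : (A ⨿ C) ⨯ (B ⨿ D) ⟶ X) :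
    coprod.inl ≫ biIota A B C D ≫ h = prod.map coprod.inl coprod.inl ≫ h := by
  rw [← Category.assoc, inl_biIota]

theorem inr_biIota_assoc {A B C D X : 𝒞} (h : (A ⨿ C) ⨯ (B ⨿ D) ⟶ X) :
    coprod.inr ≫ biIota A B C D ≫ h = prod.map coprod.inr coprod.inr ≫ h := by
  rw [← Category.assoc, inr_biIota]

theorem biIota_naturality {A B C D A' B' C' D' : 𝒞} (a : A ⟶ A') (b : B ⟶ B') (c : C ⟶ C')
    (d : D ⟶ D') :
    coprod.map (prod.map a b) (prod.map c d) ≫ biIota A' B' C' D' =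
      biIota A B C D ≫ prod.map (coprod.map a c) (coprod.map b d) := by
  apply prod.hom_ext <;>
    simp only [Category.assoc, prod.map_fst, prod.map_snd, biIota_fst, biIota_snd,
      biIota_fst_assoc, biIota_snd_assoc, coprod.map_map]

theorem biIota_coprod_associator (A B C D E F : 𝒞) :
    coprod.map (𝟙 (A ⨯ D)) (biIota B E C F) ≫ biIota A D (B ⨿ C) (E ⨿ F) ≫
        prod.map (coprod.associator A B C).inv (coprod.associator D E F).inv =
      (coprod.associator (A ⨯ D) (B ⨯ E) (C ⨯ F)).inv ≫
        coprod.map (biIota A D B E) (𝟙 (C ⨯ F)) ≫ biIota (A ⨿ B) (D ⨿ E) C F := by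
  apply prod.hom_ext <;>
    simp only [Category.assoc, prod.map_fst, prod.map_snd, biIota_fst_assoc, biIota_snd_assoc,
      coprod.map_map_assoc, coprod.map_map, Category.id_comp, biIota_fst, biIota_snd,
      coprod.associator_inv_naturality]

theorem biIota_prod_associator (A B C D E F : 𝒞) :
    biIota A (B ⨯ C) D (E ⨯ F) ≫ prod.map (𝟙 (A ⨿ D)) (biIota B C E F) ≫
        (prod.associator (A ⨿ D) (B ⨿ E) (C ⨿ F)).inv =
      coprod.map (prod.associator A B C).inv (prod.associator D E F).inv ≫
        biIota (A ⨯ B) C (D ⨯ E) F ≫ prod.map (biIota A B D E) (𝟙 (C ⨿ F)) := by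
  apply coprod.hom_ext <;>
    simp only [coprod.inl_map_assoc, coprod.inr_map_assoc, inl_biIota_assoc, inr_biIota_assoc,
      prod.map_map, prod.map_map_assoc, Category.comp_id, inl_biIota, inr_biIota,
      prod.associator_inv_naturality]

end Interchange

section Unitors

variable [HasBinaryProducts 𝒞] [HasBinaryCoproducts 𝒞]

theorem biIota_rPlus [HasInitial 𝒞] (A B : 𝒞) :
    coprod.map (𝟙 (A ⨯ B)) (initial.to ((⊥_ 𝒞) ⨯ (⊥_ 𝒞))) ≫
        biIota A B (⊥_ 𝒞) (⊥_ 𝒞) ≫ prod.map (rPlus A) (rPlus B) = rPlus (A ⨯ B) := by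
  refine coprod.hom_ext ?_ (initial.hom_ext _ _)
  simp only [rPlus, coprod.inl_map_assoc, Category.id_comp, inl_biIota_assoc, prod.map_map,
    coprod.inl_desc, prod.map_id_id]

theorem biIota_lPlus [HasInitial 𝒞] (A B : 𝒞) :
    coprod.map (initial.to ((⊥_ 𝒞) ⨯ (⊥_ 𝒞))) (𝟙 (A ⨯ B)) ≫
        biIota (⊥_ 𝒞) (⊥_ 𝒞) A B ≫ prod.map (lPlus A) (lPlus B) = lPlus (A ⨯ B) := by
  refine coprod.hom_ext (initial.hom_ext _ _) ?_
  simp only [lPlus, coprod.inr_map_assoc, Category.id_comp, inr_biIota_assoc, prod.map_map,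
    coprod.inr_desc, prod.map_id_id]

theorem biIota_rTimes [HasTerminal 𝒞] (A B : 𝒞) :
    biIota A (⊤_ 𝒞) B (⊤_ 𝒞) ≫
        prod.map (𝟙 (A ⨿ B)) (terminal.from ((⊤_ 𝒞) ⨿ (⊤_ 𝒞))) ≫ rTimes (A ⨿ B) =
      coprod.map (rTimes A) (rTimes B) := by
  simp only [rTimes, prod.map_fst, Category.comp_id, biIota_fst]

theorem biIota_lTimes [HasTerminal 𝒞] (A B : 𝒞) :
    biIota (⊤_ 𝒞) A (⊤_ 𝒞) B ≫
        prod.map (terminal.from ((⊤_ 𝒞) ⨿ (⊤_ 𝒞))) (𝟙 (A ⨿ B)) ≫ lTimes (A ⨿ B) =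
      coprod.map (lTimes A) (lTimes B) := by
  simp only [lTimes, prod.map_snd, Category.comp_id, biIota_snd]

end Unitors

section Bicartesian

variable [HasBinaryProducts 𝒞] [HasBinaryCoproducts 𝒞] [HasInitial 𝒞] [HasTerminal 𝒞]

/-- **Statement 15**: in a bicartesian category, with `κ : 0 ⟶ 1`, `β : 0 ⟶ 0×0`,
`τ : 1+1 ⟶ 1` the unique such arrows and `ι` the canonical interchange, `ι` is
natural and the twelve defining diagrams of a two-fold monoidal category commute;
hence every bicartesian category is a two-fold monoidal (duoidal) category with first
structure `(+,0)` and second structure `(×,1)`. -/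
theorem bicartesian_twofold_monoidal :
    -- naturality of ι
    (∀ {A B C D A' B' C' D' : 𝒞} (a : A ⟶ A') (b : B ⟶ B') (c : C ⟶ C') (d : D ⟶ D'),
      coprod.map (prod.map a b) (prod.map c d) ≫ biIota A' B' C' D' =
        biIota A B C D ≫ prod.map (coprod.map a c) (coprod.map b d)) ∧
    -- (1)
    (∀ A B C D E F : 𝒞,
      coprod.map (𝟙 (A ⨯ D)) (biIota B E C F) ≫ biIota A D (B ⨿ C) (E ⨿ F) ≫
          prod.map (coprod.associator A B C).inv (coprod.associator D E F).inv =
        (coprod.associator (A ⨯ D) (B ⨯ E) (C ⨯ F)).inv ≫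
          coprod.map (biIota A D B E) (𝟙 (C ⨯ F)) ≫ biIota (A ⨿ B) (D ⨿ E) C F) ∧
    -- (2)
    (∀ A B : 𝒞,
      coprod.map (𝟙 (A ⨯ B)) (initial.to ((⊥_ 𝒞) ⨯ (⊥_ 𝒞))) ≫
          biIota A B (⊥_ 𝒞) (⊥_ 𝒞) ≫ prod.map (rPlus A) (rPlus B) =
        rPlus (A ⨯ B)) ∧
    -- (3)
    (∀ A B : 𝒞,
      coprod.map (initial.to ((⊥_ 𝒞) ⨯ (⊥_ 𝒞))) (𝟙 (A ⨯ B)) ≫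
          biIota (⊥_ 𝒞) (⊥_ 𝒞) A B ≫ prod.map (lPlus A) (lPlus B) =
        lPlus (A ⨯ B)) ∧
    -- (4)
    (coprod.map (𝟙 (⊤_ 𝒞)) (terminal.from ((⊤_ 𝒞) ⨿ (⊤_ 𝒞))) ≫
        terminal.from ((⊤_ 𝒞) ⨿ (⊤_ 𝒞)) =
      (coprod.associator (⊤_ 𝒞) (⊤_ 𝒞) (⊤_ 𝒞)).inv ≫
        coprod.map (terminal.from ((⊤_ 𝒞) ⨿ (⊤_ 𝒞))) (𝟙 (⊤_ 𝒞)) ≫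
        terminal.from ((⊤_ 𝒞) ⨿ (⊤_ 𝒞))) ∧
    -- (5)
    (coprod.map (𝟙 (⊤_ 𝒞)) (initial.to (⊤_ 𝒞)) ≫ terminal.from ((⊤_ 𝒞) ⨿ (⊤_ 𝒞)) =
      rPlus (⊤_ 𝒞)) ∧
    -- (6)
    (coprod.map (initial.to (⊤_ 𝒞)) (𝟙 (⊤_ 𝒞)) ≫ terminal.from ((⊤_ 𝒞) ⨿ (⊤_ 𝒞)) =
      lPlus (⊤_ 𝒞)) ∧
    -- (7)
    (∀ A B C D E F : 𝒞,
      biIota A (B ⨯ C) D (E ⨯ F) ≫ prod.map (𝟙 (A ⨿ D)) (biIota B C E F) ≫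
          (prod.associator (A ⨿ D) (B ⨿ E) (C ⨿ F)).inv =
        coprod.map (prod.associator A B C).inv (prod.associator D E F).inv ≫
          biIota (A ⨯ B) C (D ⨯ E) F ≫ prod.map (biIota A B D E) (𝟙 (C ⨿ F))) ∧
    -- (8)
    (∀ A B : 𝒞,
      biIota A (⊤_ 𝒞) B (⊤_ 𝒞) ≫
          prod.map (𝟙 (A ⨿ B)) (terminal.from ((⊤_ 𝒞) ⨿ (⊤_ 𝒞))) ≫ rTimes (A ⨿ B) =
        coprod.map (rTimes A) (rTimes B)) ∧
    -- (9)
    (∀ A B : 𝒞,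
      biIota (⊤_ 𝒞) A (⊤_ 𝒞) B ≫
          prod.map (terminal.from ((⊤_ 𝒞) ⨿ (⊤_ 𝒞))) (𝟙 (A ⨿ B)) ≫ lTimes (A ⨿ B) =
        coprod.map (lTimes A) (lTimes B)) ∧
    -- (10)
    (initial.to ((⊥_ 𝒞) ⨯ (⊥_ 𝒞)) ≫
        prod.map (𝟙 (⊥_ 𝒞)) (initial.to ((⊥_ 𝒞) ⨯ (⊥_ 𝒞))) ≫
        (prod.associator (⊥_ 𝒞) (⊥_ 𝒞) (⊥_ 𝒞)).inv =
      initial.to ((⊥_ 𝒞) ⨯ (⊥_ 𝒞)) ≫ prod.map (initial.to ((⊥_ 𝒞) ⨯ (⊥_ 𝒞))) (𝟙 (⊥_ 𝒞))) ∧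
    -- (11)
    (initial.to ((⊥_ 𝒞) ⨯ (⊥_ 𝒞)) ≫ prod.map (𝟙 (⊥_ 𝒞)) (initial.to (⊤_ 𝒞)) ≫
        rTimes (⊥_ 𝒞) = 𝟙 (⊥_ 𝒞)) ∧
    -- (12)
    (initial.to ((⊥_ 𝒞) ⨯ (⊥_ 𝒞)) ≫ prod.map (initial.to (⊤_ 𝒞)) (𝟙 (⊥_ 𝒞)) ≫
        lTimes (⊥_ 𝒞) = 𝟙 (⊥_ 𝒞)) :=
  ⟨biIota_naturality, biIota_coprod_associator, biIota_rPlus, biIota_lPlus,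
    terminal.hom_ext _ _, terminal.hom_ext _ _, terminal.hom_ext _ _,
    biIota_prod_associator, biIota_rTimes, biIota_lTimes,
    initial.hom_ext _ _, initial.hom_ext _ _, initial.hom_ext _ _⟩

end Bicartesian
end

section
/- Let C be a braided monoidal category with braiding c, associator α, unitors λ, ρ, and unit I. Define ι_{A,B,C,D} : (A⊗B)⊗(C⊗D) → (A⊗C)⊗(B⊗D) as the middle-four interchange α^{-1}_{A,C,B⊗D}∘(1_A⊗(α_{C,B,D}∘(c_{B,C}⊗1_D)∘α^{-1}_{B,C,D}))∘α_{A,B,C⊗D}, and set κ = 1_I : I → I, β = λ_I^{-1} : I → I⊗I, τ = λ_I : I⊗I → I. Then the twelve defining diagrams of a two-fold monoidal category, with both monoidal structures equal to that of C and coherence isomorphisms inserted, commute: (1) (α⊗α)∘ι∘(1⊗ι) = ι∘(ι⊗1)∘α; (2) (ρ⊗ρ)∘ι∘(1⊗β) = ρ; (3) (λ⊗λ)∘ι∘(β⊗1) = λ; (4) τ∘(1⊗τ) = τ∘(τ⊗1)∘α; (5) τ∘(1⊗κ) = ρ_I; (6) τ∘(κ⊗1) = λ_I; (7) α∘(1⊗ι)∘ι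 = (ι⊗1)∘ι∘(α⊗α); (8) ρ_{A⊗B}∘(1⊗τ)∘ι_{A,I,B,I} = ρ_A⊗ρ_B; (9) λ_{A⊗B}∘(τ⊗1)∘ι_{I,A,I,B} = λ_A⊗λ_B; (10) α∘(1⊗β)∘β = (β⊗1)∘β; (11) ρ_I∘(1⊗κ)∘β = 1_I; (12) λ_I∘(κ⊗1)∘β = 1_I. Hence every braided monoidal category is a two-fold monoidal category with both monoidal structures the same, ι obtained from the braiding, and κ the identity. -/
/-!
The interchange `ι` is Mathlib's `tensorμ`, the structure map making `⊗ : C × C ⥤ C` a monoidal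
functor. Diagrams (1)–(3) are the associativity and unitality of this lax monoidal structure, and
(7)–(9) say that the associator and the unitors are monoidal natural transformations; both sets
are in Mathlib up to moving an inverse associator across. The remaining six diagrams only involve
the unit object and hold by coherence.
-/

open CategoryTheory MonoidalCategory

universe v u

variable {𝒞 : Type u} [Category.{v} 𝒞] [MonoidalCategory 𝒞] [BraidedCategory 𝒞]

/-- The middle-four interchange
`ι_{A,B,C,D} = α⁻¹_{A,C,B⊗D} ∘ (1_A ⊗ (α_{C,B,D} ∘ (c_{B,C} ⊗ 1_D) ∘ α⁻¹_{B,C,D})) ∘ α_{A,B,C⊗D}`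
built from the braiding (Mathlib's `tensor_μ`). -/
def brIota (A B C D : 𝒞) : (A ⊗ B) ⊗ (C ⊗ D) ⟶ (A ⊗ C) ⊗ (B ⊗ D) :=
  (α_ A B (C ⊗ D)).hom ≫
    (𝟙 A ⊗ₘ ((α_ B C D).inv ≫ ((β_ B C).hom ⊗ₘ 𝟙 D) ≫ (α_ C B D).hom)) ≫
    (α_ A C (B ⊗ D)).inv

lemma brIota_eq_tensorμ (A B C D : 𝒞) : brIota A B C D = tensorμ A B C D := by
  simp [brIota, tensorμ, MonoidalCategory.tensorHom_def]

theorem tensor_associativity_inv (X₁ X₂ Y₁ Y₂ Z₁ Z₂ : 𝒞) :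
    ((X₁ ⊗ X₂) ◁ tensorμ Y₁ Y₂ Z₁ Z₂) ≫ tensorμ X₁ X₂ (Y₁ ⊗ Z₁) (Y₂ ⊗ Z₂) ≫
        ((α_ X₁ Y₁ Z₁).inv ⊗ₘ (α_ X₂ Y₂ Z₂).inv) =
      (α_ (X₁ ⊗ X₂) (Y₁ ⊗ Y₂) (Z₁ ⊗ Z₂)).inv ≫ (tensorμ X₁ X₂ Y₁ Y₂ ▷ (Z₁ ⊗ Z₂)) ≫
        tensorμ (X₁ ⊗ Y₁) (X₂ ⊗ Y₂) Z₁ Z₂ := by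
  rw [Iso.eq_inv_comp, ← Category.assoc, ← Category.assoc, ← tensorIso_inv, Iso.comp_inv_eq,
    Category.assoc, Category.assoc, tensorIso_hom, tensor_associativity]

theorem associator_inv_monoidal (X₁ X₂ X₃ Y₁ Y₂ Y₃ : 𝒞) :
    tensorμ X₁ (X₂ ⊗ X₃) Y₁ (Y₂ ⊗ Y₃) ≫ ((X₁ ⊗ Y₁) ◁ tensorμ X₂ X₃ Y₂ Y₃) ≫
        (α_ (X₁ ⊗ Y₁) (X₂ ⊗ Y₂) (X₃ ⊗ Y₃)).inv =
      ((α_ X₁ X₂ X₃).inv ⊗ₘ (α_ Y₁ Y₂ Y₃).inv) ≫ tensorμ (X₁ ⊗ X₂) X₃ (Y₁ ⊗ Y₂) Y₃ ≫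
        (tensorμ X₁ X₂ Y₁ Y₂ ▷ (X₃ ⊗ Y₃)) := by
  rw [← tensorIso_inv, Iso.eq_inv_comp]
  simp only [← Category.assoc, Iso.comp_inv_eq]
  simp only [Category.assoc, tensorIso_hom, associator_monoidal]

/-- **Statement 16**: every braided monoidal category is a two-fold monoidal
category with both monoidal structures equal to the given one, `ι` the middle-four
interchange obtained from the braiding, `κ = 1 : I ⟶ I`, `β = λ_I⁻¹ : I ⟶ I ⊗ I` and
`τ = λ_I : I ⊗ I ⟶ I`: the twelve defining diagrams of a two-fold monoidal category
(with the coherence isomorphisms inserted) commute. -/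
theorem braided_twofold_monoidal :
    -- (1)
    (∀ A B C D E F : 𝒞,
      (𝟙 (A ⊗ B) ⊗ₘ brIota C D E F) ≫ brIota A B (C ⊗ E) (D ⊗ F) ≫
          ((α_ A C E).inv ⊗ₘ (α_ B D F).inv) =
        (α_ (A ⊗ B) (C ⊗ D) (E ⊗ F)).inv ≫ (brIota A B C D ⊗ₘ 𝟙 (E ⊗ F)) ≫
          brIota (A ⊗ C) (B ⊗ D) E F) ∧
    -- (2)
    (∀ A B : 𝒞,
      (𝟙 (A ⊗ B) ⊗ₘ (λ_ (𝟙_ 𝒞)).inv) ≫ brIota A B (𝟙_ 𝒞) (𝟙_ 𝒞) ≫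
          ((ρ_ A).hom ⊗ₘ (ρ_ B).hom) = (ρ_ (A ⊗ B)).hom) ∧
    -- (3)
    (∀ A B : 𝒞,
      ((λ_ (𝟙_ 𝒞)).inv ⊗ₘ 𝟙 (A ⊗ B)) ≫ brIota (𝟙_ 𝒞) (𝟙_ 𝒞) A B ≫
          ((λ_ A).hom ⊗ₘ (λ_ B).hom) = (λ_ (A ⊗ B)).hom) ∧
    -- (4)
    ((𝟙 (𝟙_ 𝒞) ⊗ₘ (λ_ (𝟙_ 𝒞)).hom) ≫ (λ_ (𝟙_ 𝒞)).hom =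
      (α_ (𝟙_ 𝒞) (𝟙_ 𝒞) (𝟙_ 𝒞)).inv ≫ ((λ_ (𝟙_ 𝒞)).hom ⊗ₘ 𝟙 (𝟙_ 𝒞)) ≫
        (λ_ (𝟙_ 𝒞)).hom) ∧
    -- (5)
    ((𝟙 (𝟙_ 𝒞) ⊗ₘ 𝟙 (𝟙_ 𝒞)) ≫ (λ_ (𝟙_ 𝒞)).hom = (ρ_ (𝟙_ 𝒞)).hom) ∧
    -- (6)
    ((𝟙 (𝟙_ 𝒞) ⊗ₘ 𝟙 (𝟙_ 𝒞)) ≫ (λ_ (𝟙_ 𝒞)).hom = (λ_ (𝟙_ 𝒞)).hom) ∧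
    -- (7)
    (∀ A B C D E F : 𝒞,
      brIota A (B ⊗ C) D (E ⊗ F) ≫ (𝟙 (A ⊗ D) ⊗ₘ brIota B C E F) ≫
          (α_ (A ⊗ D) (B ⊗ E) (C ⊗ F)).inv =
        ((α_ A B C).inv ⊗ₘ (α_ D E F).inv) ≫ brIota (A ⊗ B) C (D ⊗ E) F ≫
          (brIota A B D E ⊗ₘ 𝟙 (C ⊗ F))) ∧
    -- (8)
    (∀ A B : 𝒞,
      brIota A (𝟙_ 𝒞) B (𝟙_ 𝒞) ≫ (𝟙 (A ⊗ B) ⊗ₘ (λ_ (𝟙_ 𝒞)).hom) ≫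
          (ρ_ (A ⊗ B)).hom = ((ρ_ A).hom ⊗ₘ (ρ_ B).hom)) ∧
    -- (9)
    (∀ A B : 𝒞,
      brIota (𝟙_ 𝒞) A (𝟙_ 𝒞) B ≫ ((λ_ (𝟙_ 𝒞)).hom ⊗ₘ 𝟙 (A ⊗ B)) ≫
          (λ_ (A ⊗ B)).hom = ((λ_ A).hom ⊗ₘ (λ_ B).hom)) ∧
    -- (10)
    ((λ_ (𝟙_ 𝒞)).inv ≫ (𝟙 (𝟙_ 𝒞) ⊗ₘ (λ_ (𝟙_ 𝒞)).inv) ≫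
        (α_ (𝟙_ 𝒞) (𝟙_ 𝒞) (𝟙_ 𝒞)).inv =
      (λ_ (𝟙_ 𝒞)).inv ≫ ((λ_ (𝟙_ 𝒞)).inv ⊗ₘ 𝟙 (𝟙_ 𝒞))) ∧
    -- (11)
    ((λ_ (𝟙_ 𝒞)).inv ≫ (𝟙 (𝟙_ 𝒞) ⊗ₘ 𝟙 (𝟙_ 𝒞)) ≫ (ρ_ (𝟙_ 𝒞)).hom = 𝟙 (𝟙_ 𝒞)) ∧
    -- (12)
    ((λ_ (𝟙_ 𝒞)).inv ≫ (𝟙 (𝟙_ 𝒞) ⊗ₘ 𝟙 (𝟙_ 𝒞)) ≫ (λ_ (𝟙_ 𝒞)).hom = 𝟙 (𝟙_ 𝒞)) := by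
  simp only [brIota_eq_tensorμ, tensorHom_id, id_tensorHom]
  exact ⟨tensor_associativity_inv, fun A B => (tensor_right_unitality A B).symm,
    fun A B => (tensor_left_unitality A B).symm, by monoidal, by simp [unitors_equal], by simp,
    associator_inv_monoidal, fun A B => (rightUnitor_monoidal A B).symm,
    fun A B => (leftUnitor_monoidal A B).symm, by monoidal, by simp [unitors_inv_equal], by simp⟩
end
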